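/- arXiv:1006.3934 — 4 statements merged into one kernel-verified Lean document; each statement's English description precedes it below -/
import Mathlib

section
/- Let A be a C*-algebra, J a closed left ideal of A, and set L = J + (ran(J))*. If a = b + c with b ∈ J and c ∈ (ran(J))*, then ‖c‖ ≤ ‖a‖ and ‖b‖ ≤ ‖a‖. -/
/-- The right annihilator of a subset `S`: `{a | b * a = 0 for all b ∈ S}`. -/
def rightAnn {A : Type*} [NonUnitalRing A] (S : Set A) : Set A :=
  {a | ∀ b ∈ S, b * a = 0}

/-- `J` is a left ideal (as a set). -/
def IsLeftIdeal {A : Type*} [NonUnitalRing A] (J : Set A) : Prop :=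
  0 ∈ J ∧ (∀ x ∈ J, ∀ y ∈ J, x + y ∈ J) ∧ (∀ x ∈ J, -x ∈ J) ∧
    ∀ (a : A), ∀ x ∈ J, a * x ∈ J

/-- Let `A` be a C*-algebra and `J` a closed left ideal. If `a = b + c` with `b ∈ J`
and `c ∈ (ran J)*`, then `‖c‖ ≤ ‖a‖` and `‖b‖ ≤ ‖a‖`. -/
theorem stmt1 {A : Type*} [NonUnitalNormedRing A] [StarRing A] [CStarRing A]
    [CompleteSpace A] [NormedSpace ℂ A] [IsScalarTower ℂ A A] [SMulCommClass ℂ A A]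
    [StarModule ℂ A]
    (J : Set A) (hJ : IsLeftIdeal J) (hJc : IsClosed J)
    (a b c : A) (hb : b ∈ J) (hc : c ∈ star '' rightAnn J) (habc : a = b + c) :
    ‖c‖ ≤ ‖a‖ ∧ ‖b‖ ≤ ‖a‖ := by
  letI : NonUnitalCStarAlgebra A := {}
  obtain ⟨d, hd, rfl⟩ := hc
  have hbd : b * d = 0 := hd b hb
  have h1 : b * star (star d) = 0 := by rwa [star_star]
  have h2 : star d * star b = 0 := by
    have := congrArg star h1
    simpa [star_mul] using this
  have key : a * star a = b * star b + star d * star (star d) := by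
    subst habc
    rw [star_add, mul_add, add_mul, add_mul, h1, h2]
    abel
  -- move to the unitization
  letI := CStarAlgebra.spectralOrder (Unitization ℂ A)
  haveI := CStarAlgebra.spectralOrderedRing (Unitization ℂ A)
  have keyU : (a : Unitization ℂ A) * star (a : Unitization ℂ A) =
      (b : Unitization ℂ A) * star (b : Unitization ℂ A) +
      ((star d : A) : Unitization ℂ A) * star ((star d : A) : Unitization ℂ A) := by
    rw [← Unitization.inr_star, ← Unitization.inr_star, ← Unitization.inr_star,
      ← Unitization.inr_mul, ← Unitization.inr_mul, ← Unitization.inr_mul,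
      ← Unitization.inr_add, key]
  have norm_le : ∀ x : A, (↑x * star ↑x : Unitization ℂ A) ≤ ↑a * star ↑a → ‖x‖ ≤ ‖a‖ := by
    intro x hx
    have h1 : ‖(↑x * star ↑x : Unitization ℂ A)‖ ≤ ‖(↑a * star ↑a : Unitization ℂ A)‖ :=
      CStarAlgebra.norm_le_norm_of_nonneg_of_le (mul_star_self_nonneg _) hx
    rw [← Unitization.inr_star, ← Unitization.inr_mul, ← Unitization.inr_star,
      ← Unitization.inr_mul, Unitization.norm_inr, Unitization.norm_inr,
      CStarRing.norm_self_mul_star, CStarRing.norm_self_mul_star] at h1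
    nlinarith [norm_nonneg x, norm_nonneg a]
  constructor
  · exact norm_le (star d) (by rw [keyU]; exact le_add_of_nonneg_left (mul_star_self_nonneg _))
  · exact norm_le b (by rw [keyU]; exact le_add_of_nonneg_right (mul_star_self_nonneg _))
end

section
/- Let A be a topological algebra with a left approximate identity bounded by a constant, and let X be a left topological module over A. Then the map κ: A ⊗̂_A X → X, a ⊗_A x ↦ a·x, is injective. (Banach-algebra version: if A is a Banach algebra with a left bounded approximate identity and X is a Banach left A-module, then for u in the module tensor product A ⊗̂_A X, if κ(u) = 0 then u = 0, and ‖u‖ ≤ C·‖κ(u)‖ where C bounds the approximate identity.) -/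
/-- (Banach-algebra version.) Let `A` be a Banach algebra with a left approximate
identity `(e_ν)` bounded by `C`, and let `X` be a Banach left `A`-module. Let `T`
realize the module projective tensor product `A ⊗̂_A X`: a Banach space equipped with
a continuous bilinear map `tmul` of norm `≤ 1` whose elementary tensors span a dense
subspace and satisfy the module relation `tmul (a*b) x = tmul a (b • x)`, together
with the induced map `κ : T → X`, `κ (a ⊗_A x) = a • x`. Then `‖u‖ ≤ C·‖κ u‖` for
every `u`, and `κ` is injective. -/
theorem stmt10 {A : Type*} [NormedRing A] [NormedAlgebra ℂ A] [CompleteSpace A]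
    {X : Type*} [NormedAddCommGroup X] [NormedSpace ℂ X] [Module A X]
    [IsScalarTower ℂ A X] [SMulCommClass ℂ A X]
    (hbd : ∀ (a : A) (x : X), ‖a • x‖ ≤ ‖a‖ * ‖x‖)
    {T : Type*} [NormedAddCommGroup T] [NormedSpace ℂ T] [CompleteSpace T]
    (tmul : A →L[ℂ] X →L[ℂ] T)
    (hnorm : ∀ (a : A) (x : X), ‖tmul a x‖ ≤ ‖a‖ * ‖x‖)
    (hdense : closure (Submodule.span ℂ {t : T | ∃ (a : A) (x : X), t = tmul a x} : Set T)
      = Set.univ)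
    (hrel : ∀ (a b : A) (x : X), tmul (a * b) x = tmul a (b • x))
    (κ : T →L[ℂ] X) (hκ : ∀ (a : A) (x : X), κ (tmul a x) = a • x)
    {ι : Type*} (l : Filter ι) [l.NeBot] (e : ι → A) (C : ℝ)
    (hC : ∀ ν, ‖e ν‖ ≤ C)
    (hai : ∀ a : A, Filter.Tendsto (fun ν => e ν * a) l (nhds a)) :
    (∀ u : T, ‖u‖ ≤ C * ‖κ u‖) ∧ Function.Injective κ := by
  have key : ∀ u : T, ‖u‖ ≤ C * ‖κ u‖ := by
    -- First: convergence on the span of elementary tensors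
    have hconv : ∀ v ∈ Submodule.span ℂ {t : T | ∃ (a : A) (x : X), t = tmul a x},
        Filter.Tendsto (fun ν => tmul (e ν) (κ v)) l (nhds v) := by
      intro v hv
      induction hv using Submodule.span_induction with
      | mem t ht =>
        obtain ⟨a, x, rfl⟩ := ht
        have : ∀ ν, tmul (e ν) (κ (tmul a x)) = tmul (e ν * a) x := by
          intro ν; rw [hκ, hrel]
        simp only [this]
        have hc : Continuous (fun b : A => tmul b x) :=
          (ContinuousLinearMap.apply ℂ T x).continuous.comp tmul.continuous
        exact (hc.tendsto a).comp (hai a)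
      | zero => simpa using tendsto_const_nhds
      | add p q _ _ hp hq =>
        simpa [map_add] using hp.add hq
      | smul c p _ hp =>
        simpa [map_smul] using hp.const_smul c
    -- the inequality on the span
    have hspan : ∀ v ∈ Submodule.span ℂ {t : T | ∃ (a : A) (x : X), t = tmul a x},
        ‖v‖ ≤ C * ‖κ v‖ := by
      intro v hv
      have h1 : Filter.Tendsto (fun ν => ‖tmul (e ν) (κ v)‖) l (nhds ‖v‖) :=
        (continuous_norm.tendsto v).comp (hconv v hv)
      refine le_of_tendsto h1 (Filter.Eventually.of_forall fun ν => ?_)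
      calc ‖tmul (e ν) (κ v)‖ ≤ ‖e ν‖ * ‖κ v‖ := hnorm _ _
        _ ≤ C * ‖κ v‖ := mul_le_mul_of_nonneg_right (hC ν) (norm_nonneg _)
    -- extend by density
    intro u
    have hcl : IsClosed {u : T | ‖u‖ ≤ C * ‖κ u‖} := by
      apply isClosed_le continuous_norm
      exact (continuous_const.mul (continuous_norm.comp κ.continuous))
    have : closure (Submodule.span ℂ {t : T | ∃ (a : A) (x : X), t = tmul a x} : Set T)
        ⊆ {u : T | ‖u‖ ≤ C * ‖κ u‖} := closure_minimal hspan hcl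
    exact this (by rw [hdense]; trivial)
  refine ⟨key, ?_⟩
  intro u v huv
  have : ‖u - v‖ ≤ C * ‖κ (u - v)‖ := key _
  rw [map_sub, huv, sub_self, norm_zero, mul_zero] at this
  have := le_antisymm this (norm_nonneg _)
  rwa [norm_eq_zero, sub_eq_zero] at this
end

section
/- Let E be a complete Hausdorff locally convex space and H a Hilbert space. Then for each nonzero u in the completed projective tensor product E ⊗̂ H there exist continuous linear functionals f on E and g on H such that (f ⊗ g)(u) ≠ 0. (Banach-space version: if E is a Banach space and H a Hilbert space, the natural map E ⊗̂ H → B(E*, H**)-type bilinear-form space is injective; equivalently, continuous functionals of the form f ⊗ g separate points of E ⊗̂ H.) -/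
/-!
Suppose every `f ⊗ g` vanishes at `u`; it suffices to show that every continuous functional
`Φ₀` on `E ⊗̂ H` vanishes at `u`. Approximate `u` by a finite sum of elementary tensors `t`, whose
second factors span a finite-dimensional `K ⊆ H`. With `P` the orthogonal projection onto `K`, the
form `(x, y) ↦ Φ₀ (x ⊗ P y)` is a finite sum of products `f ⊗ g` (expand `P` in an orthonormal
basis of `K`), so its extension `Ψ` kills `u`, while `Ψ t = Φ₀ t`. Since `‖P‖ ≤ 1`, the norm of `Ψ`
is bounded independently of `t`, hence `‖Φ₀ u‖ = ‖(Φ₀ - Ψ) (u - t)‖ ≤ C ‖u - t‖`, which can be made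
arbitrarily small.
-/

open Submodule

theorem Submodule.exists_fg_mem_span_of_mem_span {R X F G : Type*} [Semiring R]
    [AddCommMonoid F] [Module R F] [AddCommMonoid G] [Module R G] (B : X → F → G) {t : G}
    (ht : t ∈ span R {t | ∃ x y, t = B x y}) :
    ∃ K : Submodule R F, K.FG ∧ t ∈ span R {t | ∃ x, ∃ y ∈ K, t = B x y} := by
  have mono : Monotone fun K : Submodule R F => span R {t | ∃ x, ∃ y ∈ K, t = B x y} :=
    fun K K' hK => span_mono fun _ ⟨x, y, hy, h⟩ => ⟨x, y, hK hy, h⟩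
  induction ht using span_induction with
  | mem _ h =>
    obtain ⟨x, y, rfl⟩ := h
    exact ⟨R ∙ y, fg_span_singleton y, subset_span ⟨x, y, mem_span_singleton_self y, rfl⟩⟩
  | zero => exact ⟨⊥, fg_bot, zero_mem _⟩
  | add _ _ _ _ h₁ h₂ =>
    obtain ⟨K₁, hK₁, h₁⟩ := h₁
    obtain ⟨K₂, hK₂, h₂⟩ := h₂
    exact ⟨K₁ ⊔ K₂, hK₁.sup hK₂, add_mem (mono le_sup_left h₁) (mono le_sup_right h₂)⟩
  | smul c _ _ h =>
    obtain ⟨K, hK, h⟩ := h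
    exact ⟨K, hK, smul_mem _ c h⟩

section

variable {𝕜 E F H T : Type*} [RCLike 𝕜]
  [NormedAddCommGroup E] [NormedSpace 𝕜 E] [NormedAddCommGroup F] [NormedSpace 𝕜 F]
  [NormedAddCommGroup H] [InnerProductSpace 𝕜 H] [NormedAddCommGroup T] [NormedSpace 𝕜 T]

theorem ContinuousLinearMap.exists_sum_eq_apply_starProjection (B : E →L[𝕜] H →L[𝕜] 𝕜)
    (K : Submodule 𝕜 H) [FiniteDimensional 𝕜 K] :
    ∃ (n : ℕ) (f : Fin n → E →L[𝕜] 𝕜) (g : Fin n → H →L[𝕜] 𝕜),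
      ∀ x y, B x (K.starProjection y) = ∑ i, f i x * g i y := by
  let b := stdOrthonormalBasis 𝕜 K
  refine ⟨_, fun i => B.flip (b i), fun i => innerSL 𝕜 (b i : H), fun x y => ?_⟩
  simp [b.starProjection_eq_sum_rankOne, mul_comm]

theorem apply_eq_zero_of_apply_tmul_eq_sum (tmul : E →L[𝕜] F →L[𝕜] T)
    (hdense : Dense (span 𝕜 {t | ∃ x y, t = tmul x y} : Set T))
    (hprod : ∀ (f : E →L[𝕜] 𝕜) (g : F →L[𝕜] 𝕜),
      ∃ Φ : T →L[𝕜] 𝕜, ∀ x y, Φ (tmul x y) = f x * g y)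
    {u : T} (hu : ∀ (f : E →L[𝕜] 𝕜) (g : F →L[𝕜] 𝕜) (Φ : T →L[𝕜] 𝕜),
      (∀ x y, Φ (tmul x y) = f x * g y) → Φ u = 0)
    {n : ℕ} (f : Fin n → E →L[𝕜] 𝕜) (g : Fin n → F →L[𝕜] 𝕜) {Φ : T →L[𝕜] 𝕜}
    (hΦ : ∀ x y, Φ (tmul x y) = ∑ i, f i x * g i y) : Φ u = 0 := by
  choose Φ' hΦ' using fun i => hprod (f i) (g i)
  have : Φ = ∑ i, Φ' i :=
    ContinuousLinearMap.ext_on hdense (by rintro _ ⟨x, y, rfl⟩; simp [hΦ, hΦ'])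
  simp [this, hu _ _ _ (hΦ' _)]

theorem norm_apply_le_of_forall_product_apply_eq_zero (tmul : E →L[𝕜] H →L[𝕜] T)
    (hdense : Dense (span 𝕜 {t | ∃ x y, t = tmul x y} : Set T))
    (huniv : ∀ φ : E →L[𝕜] H →L[𝕜] 𝕜, ∃ Φ : T →L[𝕜] 𝕜,
      (∀ x y, Φ (tmul x y) = φ x y) ∧ ‖Φ‖ ≤ ‖φ‖)
    {u : T} (hu : ∀ (f : E →L[𝕜] 𝕜) (g : H →L[𝕜] 𝕜) (Φ : T →L[𝕜] 𝕜),
      (∀ x y, Φ (tmul x y) = f x * g y) → Φ u = 0)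
    (Φ₀ : T →L[𝕜] 𝕜) {t : T} (ht : t ∈ span 𝕜 {t | ∃ x y, t = tmul x y}) :
    ‖Φ₀ u‖ ≤ (‖Φ₀‖ + ‖Φ₀.compL 𝕜 H T 𝕜 ∘L tmul‖) * ‖u - t‖ := by
  set B := Φ₀.compL 𝕜 H T 𝕜 ∘L tmul
  obtain ⟨K, hK, htK⟩ := exists_fg_mem_span_of_mem_span (fun x y => tmul x y) ht
  have : FiniteDimensional 𝕜 K := Module.Finite.iff_fg.2 hK
  let φ := B.bilinearComp (.id 𝕜 E) K.starProjection
  have hφ : ‖φ‖ ≤ ‖B‖ := by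
    refine ContinuousLinearMap.opNorm_le_bound₂ _ (by positivity) fun x y => ?_
    calc ‖B x (K.starProjection y)‖ ≤ ‖B‖ * ‖x‖ * ‖K.starProjection y‖ := B.le_opNorm₂ _ _
      _ ≤ ‖B‖ * ‖x‖ * ‖y‖ := by gcongr; exact K.norm_starProjection_apply_le y
  obtain ⟨Ψ, hΨφ, hΨ⟩ := huniv φ
  have hΨu : Ψ u = 0 := by
    obtain ⟨n, f, g, hfg⟩ := B.exists_sum_eq_apply_starProjection K
    refine apply_eq_zero_of_apply_tmul_eq_sum tmul hdense (fun f g => ?_) hu f g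
      fun x y => (hΨφ x y).trans (hfg x y)
    obtain ⟨Φ, hΦ, -⟩ := huniv (f.smulRight g)
    exact ⟨Φ, fun x y => by simp [hΦ]⟩
  have hΨt : Ψ t = Φ₀ t := by
    refine LinearMap.eqOn_span (f := (Ψ : T →ₗ[𝕜] 𝕜)) (g := Φ₀) ?_ htK
    rintro _ ⟨x, y, hy, rfl⟩
    simp [hΨφ, φ, B, K.starProjection_eq_self_iff.2 hy]
  calc ‖Φ₀ u‖ = ‖(Φ₀ - Ψ) (u - t)‖ := by simp [hΨu, hΨt]
    _ ≤ ‖Φ₀ - Ψ‖ * ‖u - t‖ := ContinuousLinearMap.le_opNorm _ _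
    _ ≤ (‖Φ₀‖ + ‖B‖) * ‖u - t‖ := by
      gcongr
      exact (norm_sub_le _ _).trans (by gcongr; exact hΨ.trans hφ)

theorem apply_eq_zero_of_forall_product_apply_eq_zero (tmul : E →L[𝕜] H →L[𝕜] T)
    (hdense : Dense (span 𝕜 {t | ∃ x y, t = tmul x y} : Set T))
    (huniv : ∀ φ : E →L[𝕜] H →L[𝕜] 𝕜, ∃ Φ : T →L[𝕜] 𝕜,
      (∀ x y, Φ (tmul x y) = φ x y) ∧ ‖Φ‖ ≤ ‖φ‖)
    {u : T} (hu : ∀ (f : E →L[𝕜] 𝕜) (g : H →L[𝕜] 𝕜) (Φ : T →L[𝕜] 𝕜),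
      (∀ x y, Φ (tmul x y) = f x * g y) → Φ u = 0)
    (Φ₀ : T →L[𝕜] 𝕜) : Φ₀ u = 0 := by
  set C := ‖Φ₀‖ + ‖Φ₀.compL 𝕜 H T 𝕜 ∘L tmul‖
  have key : ∀ t, ‖Φ₀ u‖ ≤ C * ‖u - t‖ :=
    hdense.induction
      (fun _ => norm_apply_le_of_forall_product_apply_eq_zero tmul hdense huniv hu Φ₀)
      (isClosed_le continuous_const (by fun_prop))
  simpa using key u

end

theorem stmt11_general {E : Type*} [NormedAddCommGroup E] [NormedSpace ℂ E]
    {H : Type*} [NormedAddCommGroup H] [InnerProductSpace ℂ H]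
    {T : Type*} [NormedAddCommGroup T] [NormedSpace ℂ T]
    (tmul : E →L[ℂ] H →L[ℂ] T)
    (hdense : closure (Submodule.span ℂ {t : T | ∃ (x : E) (y : H), t = tmul x y} : Set T)
      = Set.univ)
    (huniv : ∀ φ : E →L[ℂ] H →L[ℂ] ℂ, ∃ Φ : T →L[ℂ] ℂ,
      (∀ (x : E) (y : H), Φ (tmul x y) = φ x y) ∧ ‖Φ‖ ≤ ‖φ‖) :
    ∀ u : T, u ≠ 0 → ∃ (f : E →L[ℂ] ℂ) (g : H →L[ℂ] ℂ) (Φ : T →L[ℂ] ℂ),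
      (∀ (x : E) (y : H), Φ (tmul x y) = f x * g y) ∧ Φ u ≠ 0 := by
  intro u hu
  by_contra! h
  exact hu <| SeparatingDual.eq_zero_of_forall_dual_eq_zero (R := ℂ) fun Φ₀ =>
    apply_eq_zero_of_forall_product_apply_eq_zero tmul (dense_iff_closure_eq.2 hdense) huniv h Φ₀

/-- Let `E` be a Banach space and `H` a Hilbert space, and let `T` realize the completed
projective tensor product `E ⊗̂ H`: a Banach space with a continuous bilinear map `tmul`
of norm `≤ 1` with dense span of elementary tensors, satisfying the universal property
that every continuous bilinear form on `E × H` extends (without increase of norm) to a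
continuous linear functional on `T`. Then for every nonzero `u ∈ T` there exist
continuous linear functionals `f` on `E` and `g` on `H` such that `(f ⊗ g)(u) ≠ 0`;
i.e. the functionals `f ⊗ g` separate the points of `E ⊗̂ H`. -/
theorem stmt11 {E : Type*} [NormedAddCommGroup E] [NormedSpace ℂ E] [CompleteSpace E]
    {H : Type*} [NormedAddCommGroup H] [InnerProductSpace ℂ H] [CompleteSpace H]
    {T : Type*} [NormedAddCommGroup T] [NormedSpace ℂ T] [CompleteSpace T]
    (tmul : E →L[ℂ] H →L[ℂ] T)
    (hnorm : ∀ (x : E) (y : H), ‖tmul x y‖ ≤ ‖x‖ * ‖y‖)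
    (hdense : closure (Submodule.span ℂ {t : T | ∃ (x : E) (y : H), t = tmul x y} : Set T)
      = Set.univ)
    (huniv : ∀ φ : E →L[ℂ] H →L[ℂ] ℂ, ∃ Φ : T →L[ℂ] ℂ,
      (∀ (x : E) (y : H), Φ (tmul x y) = φ x y) ∧ ‖Φ‖ ≤ ‖φ‖) :
    ∀ u : T, u ≠ 0 → ∃ (f : E →L[ℂ] ℂ) (g : H →L[ℂ] ℂ) (Φ : T →L[ℂ] ℂ),
      (∀ (x : E) (y : H), Φ (tmul x y) = f x * g y) ∧ Φ u ≠ 0 :=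
  stmt11_general tmul hdense huniv
end

section
/- Let A be a C*-algebra which is an annihilator algebra, i.e., for every closed left ideal J, ran(J) = 0 implies J = A, and for every closed right ideal K, lan(K) = 0 implies K = A. Then for every closed left ideal J of A, A = J ⊕ (ran(J))* as a direct sum of closed subspaces. -/
/-- The left annihilator of a subset `S`. -/
def leftAnn {A : Type*} [NonUnitalRing A] (S : Set A) : Set A :=
  {a | ∀ b ∈ S, a * b = 0}

/-- `K` is a right ideal (as a set). -/
def IsRightIdeal {A : Type*} [NonUnitalRing A] (K : Set A) : Prop :=
  0 ∈ K ∧ (∀ x ∈ K, ∀ y ∈ K, x + y ∈ K) ∧ (∀ x ∈ K, -x ∈ K) ∧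
    ∀ (a : A), ∀ x ∈ K, x * a ∈ K

section Aux

variable {A : Type*} [NonUnitalCStarAlgebra A]

/-- Key norm estimate: if `x * star y = 0` then `‖x‖ ≤ ‖x + y‖`. -/
lemma key_norm_le (x y : A) (h : x * star y = 0) : ‖x‖ ≤ ‖x + y‖ := by
  have h' : y * star x = 0 := by
    have := congrArg star h
    simpa [star_mul] using this
  have hsum : (x + y) * star (x + y) = x * star x + y * star y := by
    rw [star_add, add_mul, mul_add, mul_add, h, h', add_zero, zero_add]
  letI : PartialOrder (Unitization ℂ A) := CStarAlgebra.spectralOrder _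
  letI : StarOrderedRing (Unitization ℂ A) := CStarAlgebra.spectralOrderedRing _
  have hy : (0 : Unitization ℂ A) ≤ ((y * star y : A) : Unitization ℂ A) := by
    rw [Unitization.inr_mul, Unitization.inr_star]
    exact mul_star_self_nonneg _
  have hx : (0 : Unitization ℂ A) ≤ ((x * star x : A) : Unitization ℂ A) := by
    rw [Unitization.inr_mul, Unitization.inr_star]
    exact mul_star_self_nonneg _
  have hle : ((x * star x : A) : Unitization ℂ A) ≤
      ((x * star x + y * star y : A) : Unitization ℂ A) := by
    rw [Unitization.inr_add]
    exact le_add_of_nonneg_right hy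
  have hnorm : ‖x * star x‖ ≤ ‖x * star x + y * star y‖ := by
    rw [← Unitization.norm_inr (𝕜 := ℂ) (x * star x),
      ← Unitization.norm_inr (𝕜 := ℂ) (x * star x + y * star y)]
    exact CStarAlgebra.norm_le_norm_of_nonneg_of_le hx hle
  have h1 : ‖x‖ * ‖x‖ ≤ ‖x + y‖ * ‖x + y‖ := by
    calc ‖x‖ * ‖x‖ = ‖x * star x‖ := (CStarRing.norm_self_mul_star).symm
    _ ≤ ‖x * star x + y * star y‖ := hnorm
    _ = ‖(x + y) * star (x + y)‖ := by rw [hsum]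
    _ = ‖x + y‖ * ‖x + y‖ := CStarRing.norm_self_mul_star
  nlinarith [norm_nonneg x, norm_nonneg (x + y)]

theorem stmt12_aux
    (hann_l : ∀ J : Set A, IsLeftIdeal J → IsClosed J → rightAnn J = {0} → J = Set.univ) :
    ∀ J : Set A, IsLeftIdeal J → IsClosed J →
      (J ∩ star '' rightAnn J = {0} ∧
        ∀ a : A, ∃ b ∈ J, ∃ c ∈ star '' rightAnn J, a = b + c) := by
  intro J hJ hJc
  obtain ⟨hJ0, hJadd, hJneg, hJmul⟩ := hJ
  set K : Set A := star '' rightAnn J with hKdef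
  have hKmem : ∀ c : A, c ∈ K ↔ ∀ b ∈ J, b * star c = 0 := by
    intro c
    constructor
    · rintro ⟨d, hd, rfl⟩ b hb
      rw [star_star]; exact hd b hb
    · intro h
      exact ⟨star c, fun b hb => h b hb, star_star c⟩
  have hK0 : (0 : A) ∈ K := (hKmem 0).mpr fun b _ => by simp
  have hKadd : ∀ x ∈ K, ∀ y ∈ K, x + y ∈ K := by
    intro x hx y hy
    rw [hKmem] at *
    intro b hb
    rw [star_add, mul_add, hx b hb, hy b hb, add_zero]
  have hKneg : ∀ x ∈ K, -x ∈ K := by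
    intro x hx
    rw [hKmem] at *
    intro b hb
    rw [star_neg, mul_neg, hx b hb, neg_zero]
  have hKsub : ∀ x ∈ K, ∀ y ∈ K, x - y ∈ K := fun x hx y hy => by
    rw [sub_eq_add_neg]; exact hKadd x hx _ (hKneg y hy)
  have hJsub : ∀ x ∈ J, ∀ y ∈ J, x - y ∈ J := fun x hx y hy => by
    rw [sub_eq_add_neg]; exact hJadd x hx _ (hJneg y hy)
  have hKmul : ∀ (a : A), ∀ x ∈ K, a * x ∈ K := by
    intro a x hx
    rw [hKmem] at *
    intro b hb
    rw [star_mul, ← mul_assoc, hx b hb, zero_mul]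
  -- topological closedness of K
  have hRc : IsClosed (rightAnn J) := by
    have : rightAnn J = ⋂ b ∈ J, {a : A | b * a = 0} := by
      ext a; simp [rightAnn]
    rw [this]
    exact isClosed_biInter fun b _ => isClosed_eq (continuous_mul_left b) continuous_const
  have hKc : IsClosed K := by
    have : K = star ⁻¹' rightAnn J := by
      ext x
      constructor
      · rintro ⟨d, hd, rfl⟩
        simpa using hd
      · intro h
        exact ⟨star x, h, star_star x⟩
    rw [this]
    exact hRc.preimage continuous_star
  -- the norm estimates
  have hest : ∀ b ∈ J, ∀ c ∈ K, ‖b‖ ≤ ‖b + c‖ ∧ ‖c‖ ≤ ‖b + c‖ := by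
    intro b hb c hc
    have h1 : b * star c = 0 := (hKmem c).mp hc b hb
    have h2 : c * star b = 0 := by
      have := congrArg star h1
      simpa [star_mul] using this
    refine ⟨key_norm_le b c h1, ?_⟩
    rw [add_comm]
    exact key_norm_le c b h2
  -- the intersection is trivial
  have hinter : J ∩ K = {0} := by
    ext x
    simp only [Set.mem_inter_iff, Set.mem_singleton_iff]
    constructor
    · rintro ⟨hxJ, hxK⟩
      have h0 : x * star x = 0 := (hKmem x).mp hxK x hxJ
      have hn : ‖x‖ * ‖x‖ = 0 := by
        rw [← CStarRing.norm_self_mul_star, h0, norm_zero]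
      exact norm_eq_zero.mp (mul_self_eq_zero.mp hn)
    · rintro rfl
      exact ⟨hJ0, hK0⟩
  refine ⟨hinter, ?_⟩
  -- the sum set L
  set L : Set A := {x | ∃ b ∈ J, ∃ c ∈ K, x = b + c} with hLdef
  have hLideal : IsLeftIdeal L := by
    refine ⟨⟨0, hJ0, 0, hK0, by simp⟩, ?_, ?_, ?_⟩
    · rintro _ ⟨b1, hb1, c1, hc1, rfl⟩ _ ⟨b2, hb2, c2, hc2, rfl⟩
      exact ⟨b1 + b2, hJadd _ hb1 _ hb2, c1 + c2, hKadd _ hc1 _ hc2, by abel⟩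
    · rintro _ ⟨b, hb, c, hc, rfl⟩
      exact ⟨-b, hJneg _ hb, -c, hKneg _ hc, by abel⟩
    · rintro a _ ⟨b, hb, c, hc, rfl⟩
      exact ⟨a * b, hJmul a _ hb, a * c, hKmul a _ hc, by rw [mul_add]⟩
  have hLclosed : IsClosed L := by
    rw [← isSeqClosed_iff_isClosed]
    intro u x hu hux
    choose bs hbs cs hcs heq using hu
    have hdiff : ∀ m n, u m - u n = (bs m - bs n) + (cs m - cs n) := by
      intro m n
      rw [heq m, heq n]; abel
    have hcu : CauchySeq u := hux.cauchySeq
    have hcb : CauchySeq bs := by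
      rw [Metric.cauchySeq_iff] at hcu ⊢
      intro ε hε
      obtain ⟨N, hN⟩ := hcu ε hε
      refine ⟨N, fun m hm n hn => lt_of_le_of_lt ?_ (hN m hm n hn)⟩
      rw [dist_eq_norm, dist_eq_norm, hdiff m n]
      exact (hest _ (hJsub _ (hbs m) _ (hbs n)) _ (hKsub _ (hcs m) _ (hcs n))).1
    obtain ⟨bl, hbl⟩ := cauchySeq_tendsto_of_complete hcb
    have hblJ : bl ∈ J := hJc.mem_of_tendsto hbl (Filter.Eventually.of_forall hbs)
    have hcs' : ∀ n, cs n = u n - bs n := by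
      intro n; rw [heq n]; abel
    have hcl : Filter.Tendsto cs Filter.atTop (nhds (x - bl)) := by
      have := hux.sub hbl
      simpa [← hcs'] using this
    have hclK : x - bl ∈ K := hKc.mem_of_tendsto hcl (Filter.Eventually.of_forall hcs)
    exact ⟨bl, hblJ, x - bl, hclK, by abel⟩
  have hLann : rightAnn L = {0} := by
    ext a
    simp only [Set.mem_singleton_iff]
    constructor
    · intro ha
      have haR : a ∈ rightAnn J := fun b hb => ha b ⟨b, hb, 0, hK0, (add_zero b).symm⟩
      have hsaL : star a ∈ L := ⟨0, hJ0, star a, ⟨a, haR, rfl⟩, (zero_add _).symm⟩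
      have h0 : star a * a = 0 := ha _ hsaL
      have hn : ‖a‖ * ‖a‖ = 0 := by
        rw [← CStarRing.norm_star_mul_self, h0, norm_zero]
      exact norm_eq_zero.mp (mul_self_eq_zero.mp hn)
    · rintro rfl
      intro b _
      exact mul_zero b
  have hLuniv : L = Set.univ := hann_l L hLideal hLclosed hLann
  intro a
  have haL : a ∈ L := Set.eq_univ_iff_forall.mp hLuniv a
  obtain ⟨b, hb, c, hc, rfl⟩ := haL
  exact ⟨b, hb, c, hc, rfl⟩

end Aux

/-- Let `A` be a C*-algebra which is an annihilator algebra. Then for every closed left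
ideal `J` of `A`, `A = J ⊕ (ran J)*`: the intersection is `0` and every element of `A`
decomposes as a sum. -/
theorem stmt12 {A : Type*} [NonUnitalNormedRing A] [StarRing A] [CStarRing A]
    [CompleteSpace A] [NormedSpace ℂ A] [IsScalarTower ℂ A A] [SMulCommClass ℂ A A]
    [StarModule ℂ A]
    (hann_l : ∀ J : Set A, IsLeftIdeal J → IsClosed J → rightAnn J = {0} → J = Set.univ)
    (hann_r : ∀ K : Set A, IsRightIdeal K → IsClosed K → leftAnn K = {0} → K = Set.univ) :
    ∀ J : Set A, IsLeftIdeal J → IsClosed J →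
      (J ∩ star '' rightAnn J = {0} ∧
        ∀ a : A, ∃ b ∈ J, ∃ c ∈ star '' rightAnn J, a = b + c) := by
  letI : NonUnitalCStarAlgebra A :=
    { ‹NonUnitalNormedRing A›, ‹StarRing A›, ‹CompleteSpace A›, ‹CStarRing A›,
      ‹NormedSpace ℂ A›, ‹IsScalarTower ℂ A A›, ‹SMulCommClass ℂ A A›, ‹StarModule ℂ A› with }
  exact stmt12_aux hann_l
end
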